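/- Let M = 2^{n_M} for a positive integer n_M, and let R : Fin L → ℝ³. Define on the η-particle Hilbert space ℂ^{Gᶯ} the operators U = −Σ_{ν ∈ G₀} Σ_{ℓ=1}^{L} (ζ_ℓ/(π Ω^{1/3})) · (1/‖ν‖²) · Σ_{j=1}^{η} exp(−i k_ν·R_ℓ) · S_{ν,j} and V = Σ_{ν ∈ G₀} (1/(2π Ω^{1/3})) · (1/‖ν‖²) · Σ_{i ≠ j} Σ_{p,q ∈ G with p+ν ∈ G, q−ν ∈ G} (|p+ν⟩⟨p|)_i (|q−ν⟩⟨q|)_j, where S_{ν,j} = Σ_{q ∈ G with q−ν ∈ G} (|q−ν⟩⟨q|)_j. Let Ũ and Ṽ be defined by the same formulas with each coefficient 1/‖ν‖² replaced by a(ν) = (16/(M·4^{μ(ν)})) · ⌈M·4^{μ(ν)}/(16‖ν‖²)⌉. Then ‖(U + V) − (Ũ + Ṽ)‖ ≤ (2η/(π M Ω^{1/3})) · (η − 1 + 2λ_ζ) · (7·2^{n_p+1} − 9 n_p − 11 − 3·2^{−n_p}), where the norm on the left is the operator norm. -/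

import Mathlib

/-!
The error `(U + V) - (Ũ + Ṽ)` is `U_Δ + V_Δ` for the weight `Δ ν = 1/‖ν‖² - a(ν)`, and since
`a(ν)` rounds `1/‖ν‖²` up to a multiple of `16/(M·4^μ(ν))`, `|Δ ν| ≤ 16/(M·4^μ(ν))`.
Every shift `S_{ν,j}` is a partial permutation matrix, hence a contraction, and the pair term of
`V` is `S_{-ν,i} S_{ν,j}`; so `‖U_w‖ ≤ λ_ζ η/(π Ω^{1/3}) Σ|w|` and
`‖V_w‖ ≤ η(η-1)/(2π Ω^{1/3}) Σ|w|`. Finally `μ(ν) = k + 2` on the cubic shell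
`2^k ≤ max |ν_i| < 2^{k+1}`, which has `(2^{k+2}-1)³ - (2^{k+1}-1)³` points, and summing
`16/4^μ` shell by shell gives `7·2^{n_p+3} - 36 n_p - 44 - 12/2^{n_p}`.
-/

open scoped Classical

noncomputable section

/-- The set `G` of plane-wave indices. -/
def Gfin (n_p : ℕ) : Finset (Fin 3 → ℤ) :=
  Fintype.piFinset fun _ => Finset.Icc (-(2 ^ (n_p - 1) - 1)) (2 ^ (n_p - 1) - 1)

/-- `G₀`: differences of frequencies in the enlarged box, excluding the zero mode. -/
def G0fin (n_p : ℕ) : Finset (Fin 3 → ℤ) :=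
  (Fintype.piFinset fun _ => Finset.Icc (-(2 ^ n_p - 1)) (2 ^ n_p - 1)).erase 0

/-- Euclidean norm of an integer 3-vector. -/
def enorm3 (ν : Fin 3 → ℤ) : ℝ := Real.sqrt (∑ i, ((ν i : ℝ)) ^ 2)

/-- The reciprocal-lattice vector `k_ν = (2π/Ω^{1/3})·ν ∈ ℝ³`. -/
def kvec (Ω : ℝ) (ν : Fin 3 → ℤ) : EuclideanSpace ℝ (Fin 3) :=
  (2 * Real.pi / Ω ^ ((1 : ℝ) / 3)) •
    (WithLp.equiv 2 (Fin 3 → ℝ)).symm fun i => (ν i : ℝ)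

/-- The rank-one operator `(|p⟩⟨q|)_j` on the `η`-particle space, as a matrix. -/
def ketbra {n_p η : ℕ} (j : Fin η) (p q : ↥(Gfin n_p)) :
    Matrix (Fin η → ↥(Gfin n_p)) (Fin η → ↥(Gfin n_p)) ℂ :=
  fun g f => if g j = p ∧ f j = q ∧ ∀ i, i ≠ j → g i = f i then 1 else 0

/-- Operator (ℓ² → ℓ²) norm of a matrix. -/
def matOpNorm {ι : Type*} [Fintype ι] [DecidableEq ι] (A : Matrix ι ι ℂ) : ℝ :=
  ‖LinearMap.toContinuousLinearMap (Matrix.toEuclideanLin A)‖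

/-- The momentum-shift operator `S_{ν,j} = Σ_{q ∈ G, q−ν ∈ G} (|q−ν⟩⟨q|)_j`. -/
def Sop (n_p η : ℕ) (ν : Fin 3 → ℤ) (j : Fin η) :
    Matrix (Fin η → ↥(Gfin n_p)) (Fin η → ↥(Gfin n_p)) ℂ :=
  ∑ q' : ↥(Gfin n_p), ∑ q : ↥(Gfin n_p),
    if (q' : Fin 3 → ℤ) = (q : Fin 3 → ℤ) - ν then ketbra j q' q else 0

/-- The electron–nucleus potential with weights `w ν` in place of `1/‖ν‖²`:
`U_w = −Σ_{ν ∈ G₀} Σ_ℓ (ζ_ℓ/(π Ω^{1/3}))·w(ν)·Σ_j exp(−i k_ν·R_ℓ)·S_{ν,j}`. -/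
def UopW (n_p η L : ℕ) (Ω : ℝ) (ζ : Fin L → ℝ)
    (R : Fin L → EuclideanSpace ℝ (Fin 3)) (w : (Fin 3 → ℤ) → ℝ) :
    Matrix (Fin η → ↥(Gfin n_p)) (Fin η → ↥(Gfin n_p)) ℂ :=
  -∑ ν ∈ G0fin n_p, ∑ ℓ : Fin L,
    (Complex.ofReal (ζ ℓ / (Real.pi * Ω ^ ((1 : ℝ) / 3)) * w ν)) •
      ∑ j : Fin η,
        Complex.exp (-(Complex.I * Complex.ofReal (inner ℝ (kvec Ω ν) (R ℓ)))) •
          Sop n_p η ν j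

/-- The electron–electron potential with weights `w ν` in place of `1/‖ν‖²`:
`V_w = Σ_{ν ∈ G₀} (1/(2π Ω^{1/3}))·w(ν)·Σ_{i≠j} Σ_{p+ν∈G, q−ν∈G}
          (|p+ν⟩⟨p|)_i (|q−ν⟩⟨q|)_j`. -/
def VopW (n_p η : ℕ) (Ω : ℝ) (w : (Fin 3 → ℤ) → ℝ) :
    Matrix (Fin η → ↥(Gfin n_p)) (Fin η → ↥(Gfin n_p)) ℂ :=
  ∑ ν ∈ G0fin n_p,
    (Complex.ofReal (1 / (2 * Real.pi * Ω ^ ((1 : ℝ) / 3)) * w ν)) •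
      ∑ i : Fin η, ∑ j : Fin η,
        if i = j then 0 else
          ∑ p' : ↥(Gfin n_p), ∑ p : ↥(Gfin n_p), ∑ q' : ↥(Gfin n_p), ∑ q : ↥(Gfin n_p),
            if (p' : Fin 3 → ℤ) = (p : Fin 3 → ℤ) + ν ∧
                (q' : Fin 3 → ℤ) = (q : Fin 3 → ℤ) - ν then
              ketbra i p' p * ketbra j q' q
            else 0

/-- `μ(ν) = ⌊log₂ max(|ν₁|,|ν₂|,|ν₃|)⌋ + 2` for nonzero `ν ∈ ℤ³`. -/
def muIdx (ν : Fin 3 → ℤ) : ℕ :=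
  Nat.log 2 (max (ν 0).natAbs (max (ν 1).natAbs (ν 2).natAbs)) + 2

/-- The approximate coefficient
`a(ν) = (16/(M·4^{μ(ν)})) · ⌈M·4^{μ(ν)}/(16‖ν‖²)⌉`. -/
def aCoeff (M : ℝ) (ν : Fin 3 → ℤ) : ℝ :=
  (16 / (M * 4 ^ muIdx ν)) * (⌈M * 4 ^ muIdx ν / (16 * enorm3 ν ^ 2)⌉ : ℤ)

open scoped Matrix.Norms.L2Operator

theorem matOpNorm_eq_norm {ι : Type*} [Fintype ι] [DecidableEq ι] (A : Matrix ι ι ℂ) :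
    matOpNorm A = ‖A‖ := rfl

theorem norm_sq_sum_of_card_le_one {ι E : Type*} [SeminormedAddCommGroup E] {s : Finset ι}
    (hs : s.card ≤ 1) (v : ι → E) : ‖∑ i ∈ s, v i‖ ^ 2 = ∑ i ∈ s, ‖v i‖ ^ 2 := by
  rcases s.eq_empty_or_nonempty with rfl | hne
  · simp
  · obtain ⟨a, rfl⟩ := Finset.card_eq_one.mp (le_antisymm hs hne.card_pos)
    simp

theorem Matrix.l2_opNorm_partialPerm_le_one {𝕜 ι : Type*} [RCLike 𝕜] [Fintype ι] [DecidableEq ι]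
    (r : ι → ι → Prop) [DecidableRel r] (hrow : ∀ g f f', r g f → r g f' → f = f')
    (hcol : ∀ g g' f, r g f → r g' f → g = g') :
    ‖(Matrix.of fun g f => if r g f then (1 : 𝕜) else 0)‖ ≤ 1 := by
  refine ContinuousLinearMap.opNorm_le_bound _ zero_le_one fun x => ?_
  rw [one_mul, ← sq_le_sq₀ (norm_nonneg _) (norm_nonneg _), EuclideanSpace.norm_sq_eq,
    EuclideanSpace.norm_sq_eq]
  have hrow_card : ∀ g, (Finset.univ.filter (r g)).card ≤ 1 := fun g =>
    Finset.card_le_one.mpr fun f hf f' hf' => hrow g f f' (by simpa using hf) (by simpa using hf')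
  have hcol_card : ∀ f, (Finset.univ.filter (r · f)).card ≤ 1 := fun f =>
    Finset.card_le_one.mpr fun g hg g' hg' => hcol g g' f (by simpa using hg) (by simpa using hg')
  calc ∑ g, ‖(Matrix.toEuclideanLin (Matrix.of fun g f => if r g f then (1 : 𝕜) else 0) x) g‖ ^ 2
      = ∑ g, ∑ f, if r g f then ‖x f‖ ^ 2 else 0 := by
        refine Finset.sum_congr rfl fun g _ => ?_
        rw [← Finset.sum_filter, ← norm_sq_sum_of_card_le_one (hrow_card g)]
        simp [Matrix.mulVec, dotProduct, Finset.sum_filter]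
    _ = ∑ f, (Finset.univ.filter (r · f)).card • ‖x f‖ ^ 2 := by
        rw [Finset.sum_comm]
        simp [← Finset.sum_filter]
    _ ≤ ∑ f, ‖x f‖ ^ 2 := Finset.sum_le_sum fun f _ => by
        simpa using mul_le_of_le_one_left (by positivity) (by exact_mod_cast hcol_card f)

section Operators

variable {n_p η : ℕ}

theorem Sop_eq (ν : Fin 3 → ℤ) (j : Fin η) :
    Sop n_p η ν j = Matrix.of fun g f =>
      if (g j : Fin 3 → ℤ) = f j - ν ∧ ∀ i, i ≠ j → g i = f i then 1 else 0 := by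
  ext g f
  simp only [Sop, Matrix.sum_apply, Matrix.ite_apply, Matrix.zero_apply, ketbra, ← ite_and]
  rw [Fintype.sum_eq_single (g j) fun x hx => Fintype.sum_eq_zero _ fun y => if_neg (by tauto),
    Fintype.sum_eq_single (f j) fun y hy => if_neg (by tauto)]
  exact if_congr (by simp) rfl rfl

theorem norm_Sop_le_one (ν : Fin 3 → ℤ) (j : Fin η) : ‖Sop n_p η ν j‖ ≤ 1 := by
  rw [Sop_eq]
  apply Matrix.l2_opNorm_partialPerm_le_one
  · rintro g f f' ⟨hj, hi⟩ ⟨hj', hi'⟩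
    funext k
    by_cases hk : k = j
    · subst hk
      exact Subtype.ext (sub_left_inj.mp (hj.symm.trans hj'))
    · exact (hi k hk).symm.trans (hi' k hk)
  · rintro g g' f ⟨hj, hi⟩ ⟨hj', hi'⟩
    funext k
    by_cases hk : k = j
    · subst hk
      exact Subtype.ext (hj.trans hj'.symm)
    · exact (hi k hk).trans (hi' k hk).symm

theorem Sop_neg_mul_Sop (ν : Fin 3 → ℤ) (i j : Fin η) :
    Sop n_p η (-ν) i * Sop n_p η ν j =
      ∑ p' : ↥(Gfin n_p), ∑ p : ↥(Gfin n_p), ∑ q' : ↥(Gfin n_p), ∑ q : ↥(Gfin n_p),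
        if (p' : Fin 3 → ℤ) = (p : Fin 3 → ℤ) + ν ∧ (q' : Fin 3 → ℤ) = (q : Fin 3 → ℤ) - ν then
          ketbra i p' p * ketbra j q' q
        else 0 := by
  simp only [Sop, Finset.sum_mul]
  simp only [Finset.mul_sum, sub_neg_eq_add, ite_zero_mul_ite_zero, ite_and]

theorem UopW_sub {L : ℕ} (Ω : ℝ) (ζ : Fin L → ℝ) (R : Fin L → EuclideanSpace ℝ (Fin 3))
    (w₁ w₂ : (Fin 3 → ℤ) → ℝ) :
    UopW n_p η L Ω ζ R w₁ - UopW n_p η L Ω ζ R w₂ = UopW n_p η L Ω ζ R (w₁ - w₂) := by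
  simp only [UopW, ← neg_sub', ← Finset.sum_sub_distrib, Pi.sub_apply, mul_sub,
    Complex.ofReal_sub, sub_smul]

theorem VopW_sub (Ω : ℝ) (w₁ w₂ : (Fin 3 → ℤ) → ℝ) :
    VopW n_p η Ω w₁ - VopW n_p η Ω w₂ = VopW n_p η Ω (w₁ - w₂) := by
  simp only [VopW, ← Finset.sum_sub_distrib, Pi.sub_apply, mul_sub, Complex.ofReal_sub, sub_smul]

theorem norm_UopW_le {L : ℕ} {Ω : ℝ} (hΩ : 0 ≤ Ω) {ζ : Fin L → ℝ} (hζ : ∀ ℓ, 0 ≤ ζ ℓ)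
    (R : Fin L → EuclideanSpace ℝ (Fin 3)) (w : (Fin 3 → ℤ) → ℝ) :
    ‖UopW n_p η L Ω ζ R w‖ ≤
      (∑ ℓ, ζ ℓ) * η / (Real.pi * Ω ^ ((1 : ℝ) / 3)) * ∑ ν ∈ G0fin n_p, |w ν| := by
  have hc : 0 ≤ Real.pi * Ω ^ ((1 : ℝ) / 3) := by positivity
  have hphase : ∀ (ν : Fin 3 → ℤ) (ℓ : Fin L),
      ‖∑ j : Fin η, Complex.exp (-(Complex.I * Complex.ofReal (inner ℝ (kvec Ω ν) (R ℓ)))) •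
        Sop n_p η ν j‖ ≤ η := fun ν ℓ =>
    calc _ ≤ ∑ _j : Fin η, (1 : ℝ) := norm_sum_le_of_le _ fun j _ => by
          rw [norm_smul, Complex.norm_exp]
          simpa using norm_Sop_le_one ν j
      _ = η := by simp
  rw [UopW, norm_neg]
  calc _ ≤ ∑ ν ∈ G0fin n_p, ∑ ℓ, ζ ℓ / (Real.pi * Ω ^ ((1 : ℝ) / 3)) * |w ν| * η :=
        norm_sum_le_of_le _ fun ν _ => norm_sum_le_of_le _ fun ℓ _ => by
          rw [norm_smul, Complex.norm_real, Real.norm_eq_abs, abs_mul,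
            abs_of_nonneg (div_nonneg (hζ ℓ) hc)]
          exact mul_le_mul_of_nonneg_left (hphase ν ℓ)
            (mul_nonneg (div_nonneg (hζ ℓ) hc) (abs_nonneg _))
    _ = _ := by
        simp only [← Finset.sum_mul, ← Finset.sum_div, Finset.mul_sum]
        rw [Finset.sum_mul]
        exact Finset.sum_congr rfl fun _ _ => by ring

theorem norm_VopW_le {Ω : ℝ} (hΩ : 0 ≤ Ω) (w : (Fin 3 → ℤ) → ℝ) :
    ‖VopW n_p η Ω w‖ ≤
      η * (η - 1) / (2 * Real.pi * Ω ^ ((1 : ℝ) / 3)) * ∑ ν ∈ G0fin n_p, |w ν| := by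
  have hc : 0 ≤ 2 * Real.pi * Ω ^ ((1 : ℝ) / 3) := by positivity
  have hpairs : ∀ ν : Fin 3 → ℤ, ‖∑ i : Fin η, ∑ j : Fin η,
      if i = j then 0 else Sop n_p η (-ν) i * Sop n_p η ν j‖ ≤ η * (η - 1) := fun ν =>
    calc _ ≤ ∑ i : Fin η, ∑ j : Fin η, if i = j then (0 : ℝ) else 1 :=
          norm_sum_le_of_le _ fun i _ => norm_sum_le_of_le _ fun j _ => by
            split_ifs
            · simp
            · exact (norm_mul_le _ _).trans
                (mul_le_one₀ (norm_Sop_le_one _ _) (norm_nonneg _) (norm_Sop_le_one _ _))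
      _ = η * (η - 1) := by
        have hoff : ∀ i j : Fin η, (if i = j then (0 : ℝ) else 1) = 1 - if i = j then 1 else 0 :=
          fun i j => by split_ifs <;> norm_num
        simp [hoff, Finset.sum_sub_distrib, mul_sub]
  simp only [VopW, ← Sop_neg_mul_Sop]
  calc _ ≤ ∑ ν ∈ G0fin n_p, 1 / (2 * Real.pi * Ω ^ ((1 : ℝ) / 3)) * |w ν| * (η * (η - 1)) :=
        norm_sum_le_of_le _ fun ν _ => by
          rw [norm_smul, Complex.norm_real, Real.norm_eq_abs, abs_mul,
            abs_of_nonneg (one_div_nonneg.mpr hc)]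
          exact mul_le_mul_of_nonneg_left (hpairs ν) (by positivity)
    _ = _ := by
        rw [Finset.mul_sum]
        exact Finset.sum_congr rfl fun _ _ => by ring

end Operators

theorem abs_sub_mul_ceil_div_le (x : ℝ) {c : ℝ} (hc : 0 < c) : |x - c * ⌈x / c⌉| ≤ c := by
  have hlow : x ≤ c * ⌈x / c⌉ := (div_le_iff₀' hc).mp (Int.le_ceil _)
  have hupp : c * ⌈x / c⌉ < x + c := by
    have := (mul_lt_mul_iff_right₀ hc).mpr (Int.ceil_lt_add_one (x / c))
    rwa [mul_add, mul_div_cancel₀ _ hc.ne', mul_one] at this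
  rw [abs_sub_comm, abs_of_nonneg (sub_nonneg.mpr hlow)]
  linarith

theorem abs_inv_sq_sub_aCoeff_le {M : ℝ} (hM : 0 < M) (ν : Fin 3 → ℤ) :
    |1 / enorm3 ν ^ 2 - aCoeff M ν| ≤ 16 / (M * 4 ^ muIdx ν) := by
  have hceil : M * 4 ^ muIdx ν / (16 * enorm3 ν ^ 2) =
      1 / enorm3 ν ^ 2 / (16 / (M * 4 ^ muIdx ν)) := by
    rw [div_div_eq_mul_div]
    ring
  rw [aCoeff, hceil]
  exact abs_sub_mul_ceil_div_le _ (by positivity)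

def intCube (k : ℕ) : Finset (Fin 3 → ℤ) :=
  Fintype.piFinset fun _ => Finset.Icc (-(2 ^ k - 1)) (2 ^ k - 1)

theorem G0fin_eq_erase (n : ℕ) : G0fin n = (intCube n).erase 0 := rfl

theorem mem_intCube {k : ℕ} {ν : Fin 3 → ℤ} :
    ν ∈ intCube k ↔ max (ν 0).natAbs (max (ν 1).natAbs (ν 2).natAbs) < 2 ^ k := by
  have hpow : ((2 ^ k : ℕ) : ℤ) = 2 ^ k := by push_cast; ring
  simp only [intCube, Fintype.mem_piFinset, Fin.forall_fin_succ, Finset.mem_Icc,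
    IsEmpty.forall_iff, Fin.succ_zero_eq_one, Fin.succ_one_eq_two]
  rw [max_lt_iff, max_lt_iff, and_true, ← hpow]
  omega

theorem card_intCube (k : ℕ) : ((intCube k).card : ℝ) = (2 ^ (k + 1) - 1) ^ 3 := by
  have hIcc : ((Finset.Icc (-(2 ^ k - 1)) ((2 : ℤ) ^ k - 1)).card : ℤ) = 2 ^ (k + 1) - 1 := by
    rw [Int.card_Icc_of_le _ _ (by linarith [pow_pos (two_pos (α := ℤ)) k])]
    ring
  have hIccR : ((Finset.Icc (-(2 ^ k - 1)) ((2 : ℤ) ^ k - 1)).card : ℝ) = 2 ^ (k + 1) - 1 := by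
    exact_mod_cast hIcc
  rw [intCube, Fintype.card_piFinset, Finset.prod_const, Finset.card_univ, Fintype.card_fin,
    Nat.cast_pow, hIccR]

theorem intCube_subset_succ (k : ℕ) : intCube k ⊆ intCube (k + 1) := fun ν hν => by
  rw [mem_intCube] at hν ⊢
  exact hν.trans (Nat.pow_lt_pow_right one_lt_two k.lt_succ_self)

theorem muIdx_eq_of_mem_shell {k : ℕ} {ν : Fin 3 → ℤ} (h : ν ∈ intCube (k + 1))
    (h' : ν ∉ intCube k) : muIdx ν = k + 2 := by
  rw [mem_intCube] at h h'
  rw [muIdx, Nat.log_eq_of_pow_le_of_lt_pow (not_lt.mp h') h]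

theorem card_G0fin (k : ℕ) : ((G0fin k).card : ℝ) = (2 ^ (k + 1) - 1) ^ 3 - 1 := by
  have h0 : (0 : Fin 3 → ℤ) ∈ intCube k := mem_intCube.mpr (by simp)
  rw [G0fin_eq_erase, ← card_intCube, ← Finset.card_erase_add_one h0]
  push_cast
  ring

theorem G0fin_subset_succ (k : ℕ) : G0fin k ⊆ G0fin (k + 1) :=
  Finset.erase_subset_erase _ (intCube_subset_succ k)

theorem sum_G0fin_div_four_pow_muIdx (n : ℕ) :
    ∑ ν ∈ G0fin n, 16 / (4 : ℝ) ^ muIdx ν = 7 * 2 ^ (n + 3) - 36 * n - 44 - 12 / 2 ^ n := by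
  induction n with
  | zero =>
    have hcard : ((G0fin 0).card : ℝ) = 0 := by norm_num [card_G0fin]
    have hempty : G0fin 0 = ∅ := Finset.card_eq_zero.mp (by exact_mod_cast hcard)
    norm_num [hempty]
  | succ n ih =>
    have hshell : ∀ ν ∈ G0fin (n + 1) \ G0fin n, 16 / (4 : ℝ) ^ muIdx ν = 16 / 4 ^ (n + 2) :=
      fun ν hν => by
        obtain ⟨h, h'⟩ := Finset.mem_sdiff.mp hν
        rw [muIdx_eq_of_mem_shell (Finset.mem_of_mem_erase h)
          fun hn => h' (Finset.mem_erase.mpr ⟨Finset.ne_of_mem_erase h, hn⟩)]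
    have hcard : ((G0fin (n + 1) \ G0fin n).card : ℝ) =
        (G0fin (n + 1)).card - (G0fin n).card := by
      rw [Finset.card_sdiff_of_subset (G0fin_subset_succ n),
        Nat.cast_sub (Finset.card_le_card (G0fin_subset_succ n))]
    rw [← Finset.sum_sdiff (G0fin_subset_succ n), Finset.sum_congr rfl hshell, Finset.sum_const,
      nsmul_eq_mul, hcard, card_G0fin, card_G0fin, ih]
    have h4 : (4 : ℝ) ^ (n + 2) = 16 * (2 ^ n) ^ 2 := by
      rw [show (4 : ℝ) = 2 ^ 2 by norm_num, ← pow_mul, ← pow_mul]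
      ring
    rw [h4]
    field_simp
    push_cast
    ring

theorem stmt_1_general (n_p η L n_M : ℕ) (Ω : ℝ) (hΩ : 0 < Ω) (ζ : Fin L → ℝ) (hζ : ∀ ℓ, 0 < ζ ℓ)
    (R : Fin L → EuclideanSpace ℝ (Fin 3)) :
    matOpNorm
        ((UopW n_p η L Ω ζ R (fun ν => 1 / enorm3 ν ^ 2)
            + VopW n_p η Ω (fun ν => 1 / enorm3 ν ^ 2))
          - (UopW n_p η L Ω ζ R (aCoeff ((2 : ℝ) ^ n_M))
              + VopW n_p η Ω (aCoeff ((2 : ℝ) ^ n_M))))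
      ≤ (2 * η / (Real.pi * (2 : ℝ) ^ n_M * Ω ^ ((1 : ℝ) / 3))) *
          ((η : ℝ) - 1 + 2 * ∑ ℓ, ζ ℓ) *
          (7 * 2 ^ (n_p + 1) - 9 * (n_p : ℝ) - 11 - 3 / 2 ^ n_p) := by
  set Δ := (fun ν => 1 / enorm3 ν ^ 2) - aCoeff ((2 : ℝ) ^ n_M)
  have hΔ : ∑ ν ∈ G0fin n_p, |Δ ν| ≤
      4 / 2 ^ n_M * (7 * 2 ^ (n_p + 1) - 9 * (n_p : ℝ) - 11 - 3 / 2 ^ n_p) :=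
    calc ∑ ν ∈ G0fin n_p, |Δ ν| ≤ ∑ ν ∈ G0fin n_p, 16 / (2 ^ n_M * 4 ^ muIdx ν) :=
          Finset.sum_le_sum fun ν _ => abs_inv_sq_sub_aCoeff_le (by positivity) ν
      _ = 1 / 2 ^ n_M * ∑ ν ∈ G0fin n_p, 16 / (4 : ℝ) ^ muIdx ν := by
          rw [Finset.mul_sum]
          exact Finset.sum_congr rfl fun _ _ => by ring
      _ = _ := by
          rw [sum_G0fin_div_four_pow_muIdx]
          ring
  have hη : 0 ≤ (η : ℝ) * (η - 1) := by
    rcases η with _ | η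
    · simp
    · push_cast
      nlinarith
  have hζsum : 0 ≤ ∑ ℓ, ζ ℓ := Finset.sum_nonneg fun ℓ _ => (hζ ℓ).le
  rw [matOpNorm_eq_norm, add_sub_add_comm, UopW_sub, VopW_sub]
  calc _ ≤ ‖UopW n_p η L Ω ζ R Δ‖ + ‖VopW n_p η Ω Δ‖ := norm_add_le _ _
    _ ≤ ((∑ ℓ, ζ ℓ) * η / (Real.pi * Ω ^ ((1 : ℝ) / 3)) +
          η * (η - 1) / (2 * Real.pi * Ω ^ ((1 : ℝ) / 3))) * ∑ ν ∈ G0fin n_p, |Δ ν| := by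
        rw [add_mul]
        exact add_le_add (norm_UopW_le hΩ.le (fun ℓ => (hζ ℓ).le) R Δ) (norm_VopW_le hΩ.le Δ)
    _ ≤ ((∑ ℓ, ζ ℓ) * η / (Real.pi * Ω ^ ((1 : ℝ) / 3)) +
          η * (η - 1) / (2 * Real.pi * Ω ^ ((1 : ℝ) / 3))) *
          (4 / 2 ^ n_M * (7 * 2 ^ (n_p + 1) - 9 * (n_p : ℝ) - 11 - 3 / 2 ^ n_p)) := by
        gcongr
    _ = _ := by
        field_simp
        ring

/-- Error bound for the block-encoded potential with the approximate state preparation: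
with `M = 2^{n_M}`,
`‖(U + V) − (Ũ + Ṽ)‖ ≤ (2η/(π M Ω^{1/3}))·(η − 1 + 2λ_ζ)
    ·(7·2^{n_p+1} − 9 n_p − 11 − 3·2^{−n_p})`. -/
theorem stmt_1 (n_p η L n_M : ℕ) (hnp : 0 < n_p) (hη : 1 ≤ η) (hL : 1 ≤ L)
    (hnM : 0 < n_M) (Ω : ℝ) (hΩ : 0 < Ω) (ζ : Fin L → ℝ) (hζ : ∀ ℓ, 0 < ζ ℓ)
    (R : Fin L → EuclideanSpace ℝ (Fin 3)) :
    matOpNorm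
        ((UopW n_p η L Ω ζ R (fun ν => 1 / enorm3 ν ^ 2)
            + VopW n_p η Ω (fun ν => 1 / enorm3 ν ^ 2))
          - (UopW n_p η L Ω ζ R (aCoeff ((2 : ℝ) ^ n_M))
              + VopW n_p η Ω (aCoeff ((2 : ℝ) ^ n_M))))
      ≤ (2 * η / (Real.pi * (2 : ℝ) ^ n_M * Ω ^ ((1 : ℝ) / 3))) *
          ((η : ℝ) - 1 + 2 * ∑ ℓ, ζ ℓ) *
          (7 * 2 ^ (n_p + 1) - 9 * (n_p : ℝ) - 11 - 3 / 2 ^ n_p) :=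
  stmt_1_general n_p η L n_M Ω hΩ ζ hζ R

end
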